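/- Let M, ω, H be as in the odd Heisenberg setting, L ⊆ M a lagrangian subgroup, L̄ its preimage in H, and χ_L : L̄ → e* a character extending the tautological character μ_n ↪ e*. Then the space H_L = {f : H → e : f(l̄·h) = χ_L(l̄)f(h) for all l̄ ∈ L̄, h ∈ H}, with H acting by right translations, is an irreducible representation of H with the tautological central character, of dimension |M|/|L| = √|M|. -/
import Mathlib


/-- A map `ω : M × M → eˣ` is bilinear (multiplicatively valued). -/
def IsMulBilin {M : Type*} [AddCommGroup M] {e : Type*} [Field e]
    (ω : M → M → eˣ) : Prop :=
  (∀ m₁ m₂ l, ω (m₁ + m₂) l = ω m₁ l * ω m₂ l) ∧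
  (∀ m l₁ l₂, ω m (l₁ + l₂) = ω m l₁ * ω m l₂)

/-- Alternating: `ω(m,m) = 1` for all `m`. -/
def IsMulAlt {M : Type*} [AddCommGroup M] {e : Type*} [Field e]
    (ω : M → M → eˣ) : Prop := ∀ m, ω m m = 1

/-- The Heisenberg multiplication on `H = M × eˣ` twisted by `β`. -/
def heisMul {M : Type*} [AddCommGroup M] {e : Type*} [Field e]
    (β : M → M → eˣ) (x y : M × eˣ) : M × eˣ :=
  (x.1 + y.1, x.2 * y.2 * β x.1 y.1)

/-- Right translation operator on functions `H → e`: `(rt x f)(h) = f(h·x)`. -/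
def heisRT {H' : Type*} {e : Type*} [Field e]
    (mul : H' → H' → H') (x : H') : (H' → e) →ₗ[e] (H' → e) where
  toFun f := fun h => f (mul h x)
  map_add' := by intros; rfl
  map_smul' := by intros; rfl

/-- The induced model `H_L`: the subspace of functions `f : H → e` satisfying
`f((l,a)·h) = χ_L(l,a)·f(h)` for `(l,a)` in the preimage `L̄` of `L`,
where `χ_L(l,a) = χ(l)·a` extends the tautological central character. -/
def heisHL {M : Type*} [AddCommGroup M] {e : Type*} [Field e]
    (mul : M × eˣ → M × eˣ → M × eˣ) (L : AddSubgroup M) (χ : M → eˣ) :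
    Submodule e ((M × eˣ) → e) where
  carrier := {f | ∀ (l : M) (a : eˣ) (h : M × eˣ), l ∈ L →
    f (mul (l, a) h) = ((χ l * a : eˣ) : e) * f h}
  zero_mem' := by intro l a h hl; simp
  add_mem' := by
    intro f g hf hg l a h hl
    simp only [Pi.add_apply, hf l a h hl, hg l a h hl]; ring
  smul_mem' := by
    intro c f hf l a h hl
    simp only [Pi.smul_apply, smul_eq_mul, hf l a h hl]; ring

namespace HeisAux


variable {M : Type*} [AddCommGroup M] {e : Type*} [Field e]

theorem bilin_zero_left {ω : M → M → eˣ} (h : IsMulBilin ω) (m : M) : ω 0 m = 1 := by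
  have h0 := h.1 0 0 m
  rw [add_zero] at h0
  exact (left_eq_mul.mp h0)

theorem bilin_zero_right {ω : M → M → eˣ} (h : IsMulBilin ω) (m : M) : ω m 0 = 1 := by
  have h0 := h.2 m 0 0
  rw [add_zero] at h0
  exact (left_eq_mul.mp h0)

theorem bilin_sub_right {ω : M → M → eˣ} (h : IsMulBilin ω) (m a b : M) :
    ω m (a - b) = ω m a * (ω m b)⁻¹ := by
  have h0 := h.2 m b (a - b)
  rw [add_sub_cancel] at h0
  rw [h0, mul_comm (ω m b), mul_inv_cancel_right]

theorem bilin_sub_left {ω : M → M → eˣ} (h : IsMulBilin ω) (a b m : M) :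
    ω (a - b) m = ω a m * (ω b m)⁻¹ := by
  have h0 := h.1 b (a - b) m
  rw [add_sub_cancel] at h0
  rw [h0, mul_comm (ω b m), mul_inv_cancel_right]

theorem alt_skew {ω : M → M → eˣ} (hb : IsMulBilin ω) (ha : IsMulAlt ω) (a b : M) :
    ω a b * ω b a = 1 := by
  have h0 := ha (a + b)
  rw [hb.1 a b (a + b), hb.2 a a b, hb.2 b a b, ha a, ha b, one_mul, mul_one] at h0
  exact h0

theorem alt_skew' {ω : M → M → eˣ} (hb : IsMulBilin ω) (ha : IsMulAlt ω) (a b : M) :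
    ω b a = (ω a b)⁻¹ :=
  eq_inv_of_mul_eq_one_right (alt_skew hb ha a b)

theorem heisMul_assoc {β : M → M → eˣ} (hb : IsMulBilin β) (x y z : M × eˣ) :
    heisMul β (heisMul β x y) z = heisMul β x (heisMul β y z) := by
  simp only [heisMul, hb.1, hb.2, Prod.mk.injEq]
  constructor
  · rw [add_assoc]
  · simp only [mul_comm, mul_left_comm, mul_assoc]

/-- The weight function `w(m) = χ(m - out ⟦m⟧) · β(m - out ⟦m⟧, out ⟦m⟧)⁻¹`. -/
noncomputable def hlW (β : M → M → eˣ) (L : AddSubgroup M) (χ : M → eˣ) (m : M) : eˣ :=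
  χ (m - (QuotientAddGroup.mk m : M ⧸ L).out) *
    (β (m - (QuotientAddGroup.mk m : M ⧸ L).out) ((QuotientAddGroup.mk m : M ⧸ L).out))⁻¹

/-- The comparison map `Φ : (M⧸L → e) → (H → e)`, `Φ v (m,a) = a·w(m)·v(⟦m⟧)`. -/
noncomputable def hlPhi (β : M → M → eˣ) (L : AddSubgroup M) (χ : M → eˣ) :
    ((M ⧸ L) → e) →ₗ[e] ((M × eˣ) → e) where
  toFun v := fun h => ((h.2 * hlW β L χ h.1 : eˣ) : e) * v (QuotientAddGroup.mk h.1)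
  map_add' u v := by funext h; simp only [Pi.add_apply]; ring
  map_smul' c v := by funext h; simp only [Pi.smul_apply, smul_eq_mul, RingHom.id_apply]; ring

/-- The inverse map `Ψ f q = f(out q, 1)`. -/
noncomputable def hlPsi (L : AddSubgroup M) : ((M × eˣ) → e) →ₗ[e] ((M ⧸ L) → e) where
  toFun f := fun q => f (q.out, 1)
  map_add' := by intros; rfl
  map_smul' := by intros; rfl

theorem mem_hl_sub (L : AddSubgroup M) (m : M) :
    m - (QuotientAddGroup.mk m : M ⧸ L).out ∈ L := by
  have h := QuotientAddGroup.out_eq' (QuotientAddGroup.mk m : M ⧸ L)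
  exact QuotientAddGroup.eq_iff_sub_mem.mp h.symm

end HeisAux

namespace HeisAux

variable {M : Type*} [AddCommGroup M] {e : Type*} [Field e]

/-- The defining property of `heisHL` membership, definitionally. -/
theorem mem_heisHL_iff (β : M → M → eˣ) (L : AddSubgroup M) (χ : M → eˣ)
    (f : (M × eˣ) → e) :
    f ∈ heisHL (heisMul β) L χ ↔ ∀ (l : M) (a : eˣ) (h : M × eˣ), l ∈ L →
      f (heisMul β (l, a) h) = ((χ l * a : eˣ) : e) * f h := Iff.rfl

@[simp] theorem hlPhi_apply (β : M → M → eˣ) (L : AddSubgroup M) (χ : M → eˣ)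
    (v : (M ⧸ L) → e) (h : M × eˣ) :
    hlPhi β L χ v h = ((h.2 * hlW β L χ h.1 : eˣ) : e) * v (QuotientAddGroup.mk h.1) := rfl

@[simp] theorem hlPsi_apply (L : AddSubgroup M) (f : (M × eˣ) → e) (q : M ⧸ L) :
    hlPsi L f q = f (q.out, 1) := rfl

theorem heisRT_apply (mul : (M × eˣ) → (M × eˣ) → (M × eˣ)) (x : M × eˣ)
    (f : (M × eˣ) → e) (h : M × eˣ) : heisRT mul x f h = f (mul h x) := rfl

variable (β : M → M → eˣ) (L : AddSubgroup M) (χ : M → eˣ)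

theorem chi_zero (hβbil : IsMulBilin β)
    (hχ : ∀ l₁ ∈ L, ∀ l₂ ∈ L, χ (l₁ + l₂) * β l₁ l₂ = χ l₁ * χ l₂) : χ 0 = 1 := by
  have h0 := hχ 0 L.zero_mem 0 L.zero_mem
  rw [add_zero, bilin_zero_left hβbil, mul_one] at h0
  exact left_eq_mul.mp h0

theorem hlW_add (hβbil : IsMulBilin β)
    (hχ : ∀ l₁ ∈ L, ∀ l₂ ∈ L, χ (l₁ + l₂) * β l₁ l₂ = χ l₁ * χ l₂)
    {l : M} (hl : l ∈ L) (m : M) :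
    hlW β L χ (l + m) = χ l * (β l m)⁻¹ * hlW β L χ m := by
  have hq : (QuotientAddGroup.mk (l + m) : M ⧸ L) = QuotientAddGroup.mk m :=
    QuotientAddGroup.eq_iff_sub_mem.mpr (by simpa using hl)
  set t := (QuotientAddGroup.mk m : M ⧸ L).out with ht
  have hl' : m - t ∈ L := mem_hl_sub L m
  have hsplit : l + m - t = l + (m - t) := by abel
  have hβm : β l m = β l (m - t) * β l t := by
    conv_lhs => rw [show m = (m - t) + t by abel]
    exact hβbil.2 l (m - t) t
  have hχ' : χ (l + (m - t)) = χ l * χ (m - t) * (β l (m - t))⁻¹ := by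
    have h0 := hχ l hl (m - t) hl'
    rw [← h0, mul_inv_cancel_right]
  unfold hlW
  rw [hq, ← ht, hsplit, hχ', hβbil.1 l (m - t) t, hβm]
  simp only [mul_inv, mul_comm, mul_left_comm, mul_assoc]

theorem phi_mem (hβbil : IsMulBilin β)
    (hχ : ∀ l₁ ∈ L, ∀ l₂ ∈ L, χ (l₁ + l₂) * β l₁ l₂ = χ l₁ * χ l₂)
    (v : (M ⧸ L) → e) : hlPhi β L χ v ∈ heisHL (heisMul β) L χ := by
  rw [mem_heisHL_iff]
  intro l a h hl
  have hkey : heisMul β ((l : M), a) h = (l + h.1, a * h.2 * β l h.1) := rfl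
  rw [hkey, hlPhi_apply, hlPhi_apply]
  have hq : (QuotientAddGroup.mk (l + h.1) : M ⧸ L) = QuotientAddGroup.mk h.1 :=
    QuotientAddGroup.eq_iff_sub_mem.mpr (by simpa using hl)
  rw [hq, hlW_add β L χ hβbil hχ hl h.1]
  have hBne : ((β l h.1 : eˣ) : e) ≠ 0 := Units.ne_zero _
  simp only [Units.val_mul, Units.val_inv_eq_inv_val]
  field_simp

theorem psi_phi (hβbil : IsMulBilin β)
    (hχ : ∀ l₁ ∈ L, ∀ l₂ ∈ L, χ (l₁ + l₂) * β l₁ l₂ = χ l₁ * χ l₂)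
    (v : (M ⧸ L) → e) : hlPsi L (hlPhi β L χ v) = v := by
  funext q
  rw [hlPsi_apply, hlPhi_apply]
  have h1 : (QuotientAddGroup.mk q.out : M ⧸ L) = q := QuotientAddGroup.out_eq' q
  have hw : hlW β L χ q.out = 1 := by
    unfold hlW
    rw [h1, sub_self, chi_zero β L χ hβbil hχ, bilin_zero_left hβbil, inv_one, mul_one]
  rw [h1, hw]
  simp

theorem hl_scal (hβbil : IsMulBilin β)
    (hχ : ∀ l₁ ∈ L, ∀ l₂ ∈ L, χ (l₁ + l₂) * β l₁ l₂ = χ l₁ * χ l₂)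
    {f : (M × eˣ) → e} (hf : f ∈ heisHL (heisMul β) L χ) (m : M) (a : eˣ) :
    f (m, a) = (a : e) * f (m, 1) := by
  have h1 : (m, a) = heisMul β ((0 : M), a) (m, 1) := by
    simp [heisMul, bilin_zero_left hβbil]
  rw [h1, (mem_heisHL_iff β L χ f).mp hf 0 a (m, 1) L.zero_mem,
    chi_zero β L χ hβbil hχ]
  simp

theorem hl_key (hβbil : IsMulBilin β)
    {f : (M × eˣ) → e} (hf : f ∈ heisHL (heisMul β) L χ)
    {l : M} (hl : l ∈ L) (m : M) (b : eˣ) :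
    f (l + m, b) = ((χ l * (b * (β l m)⁻¹) : eˣ) : e) * f (m, 1) := by
  have h1 : heisMul β (l, b * (β l m)⁻¹) (m, 1) = (l + m, b) := by
    simp [heisMul, mul_assoc]
  rw [← h1]
  exact (mem_heisHL_iff β L χ f).mp hf l _ _ hl

theorem hl_diag (ω : M → M → eˣ) (hβbil : IsMulBilin β) (hβalt : IsMulAlt β)
    (hβsq : ∀ m₁ m₂, β m₁ m₂ ^ 2 = ω m₁ m₂)
    (hχ : ∀ l₁ ∈ L, ∀ l₂ ∈ L, χ (l₁ + l₂) * β l₁ l₂ = χ l₁ * χ l₂)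
    {f : (M × eˣ) → e} (hf : f ∈ heisHL (heisMul β) L χ)
    {l : M} (hl : l ∈ L) (h : M × eˣ) :
    heisRT (heisMul β) ((l : M), 1) f h = ((χ l * (ω l h.1)⁻¹ : eˣ) : e) * f h := by
  have h1 : heisMul β h ((l : M), 1) = (l + h.1, h.2 * β h.1 l) := by
    simp [heisMul, add_comm]
  rw [heisRT_apply, h1, hl_key β L χ hβbil hf hl h.1 (h.2 * β h.1 l)]
  have hskew : β h.1 l = (β l h.1)⁻¹ := alt_skew' hβbil hβalt l h.1
  have hsq : (ω l h.1 : eˣ) = β l h.1 * β l h.1 := by rw [← hβsq l h.1, sq]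
  have hfh : f h = (h.2 : e) * f (h.1, 1) := hl_scal β L χ hβbil hχ hf h.1 h.2
  rw [hfh, hskew, hsq]
  have hBne : ((β l h.1 : eˣ) : e) ≠ 0 := Units.ne_zero _
  simp only [Units.val_mul, Units.val_inv_eq_inv_val]
  field_simp


theorem phi_psi (hβbil : IsMulBilin β)
    (hχ : ∀ l₁ ∈ L, ∀ l₂ ∈ L, χ (l₁ + l₂) * β l₁ l₂ = χ l₁ * χ l₂)
    {f : (M × eˣ) → e} (hf : f ∈ heisHL (heisMul β) L χ) :
    hlPhi β L χ (hlPsi L f) = f := by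
  funext h
  obtain ⟨m, a⟩ := h
  simp only [hlPhi_apply, hlPsi_apply]
  set t := (QuotientAddGroup.mk m : M ⧸ L).out with ht
  have hl' : m - t ∈ L := mem_hl_sub L m
  have h2 : f (m, a) = ((χ (m - t) * (a * (β (m - t) t)⁻¹) : eˣ) : e) * f (t, 1) := by
    have h3 := hl_key β L χ hβbil hf hl' t a
    rwa [sub_add_cancel] at h3
  have hw : hlW β L χ m = χ (m - t) * (β (m - t) t)⁻¹ := by unfold hlW; rw [← ht]
  rw [h2, hw]
  simp only [Units.val_mul, Units.val_inv_eq_inv_val]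
  ring

end HeisAux

open HeisAux in
theorem induced_model_irreducible'
    {M : Type*} [AddCommGroup M] [Fintype M]
    {e : Type*} [Field e] [IsAlgClosed e] [CharZero e]
    (n : ℕ) (hodd : Odd n) (hexp : AddMonoid.exponent M = n)
    (ω β : M → M → eˣ)
    (hωbil : IsMulBilin ω) (hωalt : IsMulAlt ω)
    (hωnd : ∀ m : M, (∀ l : M, ω m l = 1) → m = 0)
    (hωord : ∀ m₁ m₂, ω m₁ m₂ ^ n = 1)
    (hβbil : IsMulBilin β) (hβalt : IsMulAlt β) (hβord : ∀ m₁ m₂, β m₁ m₂ ^ n = 1)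
    (hβsq : ∀ m₁ m₂, β m₁ m₂ ^ 2 = ω m₁ m₂)
    (L : AddSubgroup M)
    (hL : ∀ m : M, m ∈ L ↔ ∀ l ∈ L, ω m l = 1)
    (χ : M → eˣ)
    (hχ : ∀ l₁ ∈ L, ∀ l₂ ∈ L, χ (l₁ + l₂) * β l₁ l₂ = χ l₁ * χ l₂) :
    (∀ (x : M × eˣ) (f : (M × eˣ) → e), f ∈ heisHL (heisMul β) L χ →
      heisRT (heisMul β) x f ∈ heisHL (heisMul β) L χ) ∧
    (heisRT (e := e) (heisMul β) ((0 : M), (1 : eˣ)) = LinearMap.id) ∧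
    (∀ x y : M × eˣ, heisRT (e := e) (heisMul β) (heisMul β x y) =
      (heisRT (e := e) (heisMul β) x).comp (heisRT (e := e) (heisMul β) y)) ∧
    (∀ (a : eˣ) (f : (M × eˣ) → e), f ∈ heisHL (heisMul β) L χ →
      heisRT (heisMul β) ((0 : M), a) f = (a : e) • f) ∧
    (heisHL (heisMul β) L χ ≠ ⊥) ∧
    (∀ p : Submodule e ((M × eˣ) → e), p ≤ heisHL (heisMul β) L χ →
      (∀ (x : M × eˣ), ∀ f ∈ p, heisRT (heisMul β) x f ∈ p) →
      p = ⊥ ∨ p = heisHL (heisMul β) L χ) ∧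
    (Module.finrank e (heisHL (heisMul β) L χ) * Nat.card L = Fintype.card M) ∧
    (Module.finrank e (heisHL (heisMul β) L χ) ^ 2 = Fintype.card M) := by
  classical
  haveI : Fintype (M ⧸ L) := Fintype.ofFinite _
  haveI : Fintype L := Fintype.ofFinite _
  -- stability
  have stab : ∀ (x : M × eˣ) (f : (M × eˣ) → e), f ∈ heisHL (heisMul β) L χ →
      heisRT (heisMul β) x f ∈ heisHL (heisMul β) L χ := by
    intro x f hf
    rw [mem_heisHL_iff]
    intro l a h hl
    rw [heisRT_apply, heisRT_apply, heisMul_assoc hβbil]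
    exact (mem_heisHL_iff β L χ f).mp hf l a _ hl
  -- identity
  have hid : heisRT (e := e) (heisMul β) ((0 : M), (1 : eˣ)) = LinearMap.id := by
    apply LinearMap.ext; intro f; funext h
    rw [heisRT_apply]
    simp [heisMul, bilin_zero_right hβbil]
  -- homomorphism
  have hhom : ∀ x y : M × eˣ, heisRT (e := e) (heisMul β) (heisMul β x y) =
      (heisRT (e := e) (heisMul β) x).comp (heisRT (e := e) (heisMul β) y) := by
    intro x y; apply LinearMap.ext; intro f; funext h
    show f (heisMul β h (heisMul β x y)) = f (heisMul β (heisMul β h x) y)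
    rw [heisMul_assoc hβbil h x y]
  -- central character
  have hcentral : ∀ (a : eˣ) (f : (M × eˣ) → e), f ∈ heisHL (heisMul β) L χ →
      heisRT (heisMul β) ((0 : M), a) f = (a : e) • f := by
    intro a f hf; funext h
    rw [heisRT_apply]
    have h1 : heisMul β h ((0 : M), a) = (h.1, h.2 * a) := by
      simp [heisMul, bilin_zero_right hβbil]
    rw [h1]
    have h2 := hl_scal β L χ hβbil hχ hf h.1 (h.2 * a)
    have h3 := hl_scal β L χ hβbil hχ hf h.1 h.2
    show f (h.1, h.2 * a) = (a : e) * f h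
    calc f (h.1, h.2 * a) = ((h.2 * a : eˣ) : e) * f (h.1, 1) := h2
      _ = (a : e) * (((h.2 : eˣ) : e) * f (h.1, 1)) := by
          simp only [Units.val_mul]; ring
      _ = (a : e) * f h := by rw [← h3]
  -- nonzero
  have hne : heisHL (heisMul β) L χ ≠ ⊥ := by
    intro hbot
    have hmem := phi_mem β L χ hβbil hχ (fun _ => (1 : e))
    rw [hbot, Submodule.mem_bot] at hmem
    have h1 := congrFun hmem ((0 : M), (1 : eˣ))
    rw [hlPhi_apply] at h1
    simp only [Pi.zero_apply, mul_one] at h1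
    exact Units.ne_zero _ h1
  -- the linear equivalence and finrank
  have hequiv : ((M ⧸ L) → e) ≃ₗ[e] (heisHL (heisMul β) L χ) := by
    refine LinearEquiv.ofLinear
      ((hlPhi β L χ).codRestrict (heisHL (heisMul β) L χ) (phi_mem β L χ hβbil hχ))
      ((hlPsi L).comp (Submodule.subtype _)) ?_ ?_
    · apply LinearMap.ext; rintro ⟨f, hf⟩
      apply Subtype.ext
      exact phi_psi β L χ hβbil hχ hf
    · apply LinearMap.ext; intro v
      exact psi_phi β L χ hβbil hχ v
  have hrank : Module.finrank e (heisHL (heisMul β) L χ) = Fintype.card (M ⧸ L) := by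
    rw [← hequiv.finrank_eq, Module.finrank_pi]
  have hcard1 : Nat.card M = Nat.card (M ⧸ L) * Nat.card L :=
    AddSubgroup.card_eq_card_quotient_mul_card_addSubgroup L
  -- character counting : card (M ⧸ L) = card L
  have hcard2 : Fintype.card (M ⧸ L) = Nat.card L := by
    have hout0 : ((0 : M ⧸ L)).out ∈ L :=
      (QuotientAddGroup.eq_zero_iff _).mp (QuotientAddGroup.out_eq' (0 : M ⧸ L))
    have houtadd : ∀ c d : M ⧸ L, (c + d).out - (c.out + d.out) ∈ L := by
      intro c d
      apply QuotientAddGroup.eq_iff_sub_mem.mp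
      rw [QuotientAddGroup.out_eq', QuotientAddGroup.mk_add, QuotientAddGroup.out_eq',
        QuotientAddGroup.out_eq']
    -- injection `M ⧸ L ↪ characters of L`
    let F : (M ⧸ L) → (Multiplicative L →* e) := fun c =>
      { toFun := fun l => ((ω ((Multiplicative.toAdd l : L) : M) c.out : eˣ) : e)
        map_one' := by
          show ((ω (((0 : L) : M)) c.out : eˣ) : e) = 1
          rw [AddSubgroup.coe_zero, bilin_zero_left hωbil, Units.val_one]
        map_mul' := fun x y => by
          show ((ω (((Multiplicative.toAdd x + Multiplicative.toAdd y : L) : M)) c.out : eˣ) : e)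
            = _
          rw [AddSubgroup.coe_add, hωbil.1, Units.val_mul] }
    have hFinj : Function.Injective F := by
      intro c c' hcc
      have h1 : ∀ l : L, ω (l : M) c.out = ω (l : M) c'.out := fun l =>
        Units.ext (congrArg (fun φ => φ (Multiplicative.ofAdd l)) hcc)
      have h2 : ∀ l ∈ L, ω (c.out - c'.out) l = 1 := by
        intro l hl
        have h3 : ω l (c.out - c'.out) = 1 := by
          rw [bilin_sub_right hωbil, h1 ⟨l, hl⟩, mul_inv_cancel]
        rw [alt_skew' hωbil hωalt l (c.out - c'.out), h3, inv_one]
      have h4 : c.out - c'.out ∈ L := (hL _).mpr h2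
      have h5 : (QuotientAddGroup.mk c.out : M ⧸ L) = QuotientAddGroup.mk c'.out :=
        QuotientAddGroup.eq_iff_sub_mem.mpr h4
      rwa [QuotientAddGroup.out_eq', QuotientAddGroup.out_eq'] at h5
    have hle1 : Fintype.card (M ⧸ L) ≤ Fintype.card L := by
      have hLI := (linearIndependent_monoidHom (Multiplicative L) e).comp F hFinj
      have h6 := hLI.fintype_card_le_finrank
      rwa [Module.finrank_pi, Fintype.card_multiplicative] at h6
    -- injection `L ↪ characters of M ⧸ L`
    let G : L → (Multiplicative (M ⧸ L) →* e) := fun l =>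
      { toFun := fun c => ((ω (l : M) (Multiplicative.toAdd c).out : eˣ) : e)
        map_one' := by
          show ((ω (l : M) ((0 : M ⧸ L)).out : eˣ) : e) = 1
          rw [(hL (l : M)).mp l.2 _ hout0, Units.val_one]
        map_mul' := fun c d => by
          show ((ω (l : M) ((Multiplicative.toAdd c + Multiplicative.toAdd d).out) : eˣ) : e) = _
          set c' := Multiplicative.toAdd c
          set d' := Multiplicative.toAdd d
          have hδ := houtadd c' d'
          have h1 : (c' + d').out = (c'.out + d'.out) + ((c' + d').out - (c'.out + d'.out)) := by
            abel
          rw [h1, hωbil.2, hωbil.2, (hL (l : M)).mp l.2 _ hδ, mul_one, Units.val_mul] }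
    have hGinj : Function.Injective G := by
      intro l l' hll
      have h1 : ∀ c : M ⧸ L, ω (l : M) c.out = ω (l' : M) c.out := fun c =>
        Units.ext (congrArg (fun φ => φ (Multiplicative.ofAdd c)) hll)
      have h2 : ∀ m : M, ω ((l : M) - (l' : M)) m = 1 := by
        intro m
        have hδ : m - (QuotientAddGroup.mk m : M ⧸ L).out ∈ L := mem_hl_sub L m
        have hdec : m = (QuotientAddGroup.mk m : M ⧸ L).out
            + (m - (QuotientAddGroup.mk m : M ⧸ L).out) := by abel
        calc ω ((l : M) - (l' : M)) m
            = ω ((l : M) - (l' : M)) ((QuotientAddGroup.mk m : M ⧸ L).out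
              + (m - (QuotientAddGroup.mk m : M ⧸ L).out)) := by rw [← hdec]
          _ = ω ((l : M) - (l' : M)) ((QuotientAddGroup.mk m : M ⧸ L).out)
              * ω ((l : M) - (l' : M)) (m - (QuotientAddGroup.mk m : M ⧸ L).out) := hωbil.2 _ _ _
          _ = 1 := by
              rw [bilin_sub_left hωbil, h1, mul_inv_cancel,
                (hL _).mp (AddSubgroup.sub_mem L l.2 l'.2) _ hδ, mul_one]
      have h3 : (l : M) - (l' : M) = 0 := hωnd _ h2
      exact Subtype.ext (by rwa [sub_eq_zero] at h3)
    have hle2 : Fintype.card L ≤ Fintype.card (M ⧸ L) := by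
      have hLI := (linearIndependent_monoidHom (Multiplicative (M ⧸ L)) e).comp G hGinj
      have h6 := hLI.fintype_card_le_finrank
      rwa [Module.finrank_pi, Fintype.card_multiplicative] at h6
    rw [Nat.card_eq_fintype_card]
    exact le_antisymm hle1 hle2
  -- character sums
  have hsum0 : ∀ d : M, d ∉ L → (∑ l : L, ((ω (l : M) d : eˣ) : e)) = 0 := by
    intro d hd
    obtain ⟨l₀, hl₀⟩ : ∃ l₀ : L, ω (l₀ : M) d ≠ 1 := by
      by_contra hc
      push_neg at hc
      apply hd
      rw [hL]
      intro l hl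
      rw [alt_skew' hωbil hωalt l d, hc ⟨l, hl⟩, inv_one]
    have hre : (∑ l : L, ((ω ((l₀ + l : L) : M) d : eˣ) : e)) = ∑ l : L, ((ω (l : M) d : eˣ) : e) :=
      Fintype.sum_equiv (Equiv.addLeft l₀) _ _ (fun l => rfl)
    have hterm : ∀ l : L, ((ω ((l₀ + l : L) : M) d : eˣ) : e)
        = ((ω (l₀ : M) d : eˣ) : e) * ((ω (l : M) d : eˣ) : e) := by
      intro l
      rw [AddSubgroup.coe_add, hωbil.1, Units.val_mul]
    rw [Finset.sum_congr rfl (fun l _ => hterm l), ← Finset.mul_sum] at hre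
    have hne1 : ((ω (l₀ : M) d : eˣ) : e) ≠ 1 := fun hcon => hl₀ (Units.ext (by simpa using hcon))
    have h9 : (((ω (l₀ : M) d : eˣ) : e) - 1) * (∑ l : L, ((ω (l : M) d : eˣ) : e)) = 0 := by
      rw [sub_mul, one_mul, hre, sub_self]
    rcases mul_eq_zero.mp h9 with h | h
    · exact absurd (sub_eq_zero.mp h) hne1
    · exact h
  have hsum1 : ∀ d : M, d ∈ L → (∑ l : L, ((ω (l : M) d : eˣ) : e)) = (Fintype.card L : e) := by
    intro d hd
    have h1 : ∀ l : L, ((ω (l : M) d : eˣ) : e) = 1 := fun l => by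
      rw [(hL (l : M)).mp l.2 d hd, Units.val_one]
    simp [h1]
  -- irreducibility
  -- single-coset functions are scalar multiples of basis functions
  have hsingle : ∀ (c : M ⧸ L) (t : e), (Pi.single c t : (M ⧸ L) → e) = t • (Pi.single c 1 : (M ⧸ L) → e) := by
    intro c t
    funext q
    by_cases hqc : q = c
    · subst hqc; simp
    · simp [Pi.single_eq_of_ne hqc]
  have hirr : ∀ p : Submodule e ((M × eˣ) → e), p ≤ heisHL (heisMul β) L χ →
      (∀ (x : M × eˣ), ∀ f ∈ p, heisRT (heisMul β) x f ∈ p) →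
      p = ⊥ ∨ p = heisHL (heisMul β) L χ := by
    intro p hle hinv
    by_cases hp : p = ⊥
    · exact Or.inl hp
    right
    obtain ⟨f, hfp, hf0⟩ := (Submodule.ne_bot_iff p).mp hp
    have hfHL : f ∈ heisHL (heisMul β) L χ := hle hfp
    obtain ⟨h₀, hh₀⟩ : ∃ h, f h ≠ 0 := by
      by_contra hc
      push_neg at hc
      exact hf0 (funext fun h => hc h)
    -- the projector onto the coset of `m₀` stays in `p`
    have hPmem : ∀ (g : (M × eˣ) → e), g ∈ p → ∀ m₀ : M,
        (fun h : M × eˣ => (∑ l : L, ((ω (l : M) (m₀ - h.1) : eˣ) : e)) * g h) ∈ p := by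
      intro g hg m₀
      have hgHL := hle hg
      have heq : (fun h : M × eˣ => (∑ l : L, ((ω (l : M) (m₀ - h.1) : eˣ) : e)) * g h)
          = ∑ l : L, ((((χ ((l : M)))⁻¹ * ω (l : M) m₀ : eˣ)) : e)
              • (heisRT (heisMul β) ((l : M), 1) g : (M × eˣ) → e) := by
        funext h
        rw [Finset.sum_apply, Finset.sum_mul]
        apply Finset.sum_congr rfl
        intro l _
        rw [Pi.smul_apply, smul_eq_mul,
          hl_diag β L χ ω hβbil hβalt hβsq hχ hgHL l.2 h,
          bilin_sub_right hωbil (l : M) m₀ h.1]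
        simp only [Units.val_mul, Units.val_inv_eq_inv_val]
        field_simp
      rw [heq]
      exact Submodule.sum_mem p (fun l _ => Submodule.smul_mem p _ (hinv _ _ hg))
    set m₁ := h₀.1 with hm₁
    set g : (M × eˣ) → e :=
      (fun h : M × eˣ => (∑ l : L, ((ω (l : M) (m₁ - h.1) : eˣ) : e)) * f h) with hgdef
    have hgp : g ∈ p := hPmem f hfp m₁
    have hgHL : g ∈ heisHL (heisMul β) L χ := hle hgp
    have hg0 : g h₀ ≠ 0 := by
      rw [hgdef]
      show (∑ l : L, ((ω (l : M) (m₁ - h₀.1) : eˣ) : e)) * f h₀ ≠ 0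
      rw [← hm₁, sub_self, hsum1 0 L.zero_mem]
      exact mul_ne_zero (Nat.cast_ne_zero.mpr Fintype.card_ne_zero) hh₀
    have hgm1 : g (m₁, 1) ≠ 0 := by
      intro hz
      apply hg0
      have h3 := hl_scal β L χ hβbil hχ hgHL m₁ h₀.2
      show g (m₁, h₀.2) = 0
      rw [h3, hz, mul_zero]
    have hgsupp : ∀ h : M × eˣ,
        (QuotientAddGroup.mk h.1 : M ⧸ L) ≠ QuotientAddGroup.mk m₁ → g h = 0 := by
      intro h hne'
      have hnmem : m₁ - h.1 ∉ L := by
        intro hmem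
        exact hne' (QuotientAddGroup.eq_iff_sub_mem.mpr
          (by rw [← neg_sub]; exact AddSubgroup.neg_mem L hmem))
      show (∑ l : L, ((ω (l : M) (m₁ - h.1) : eˣ) : e)) * f h = 0
      rw [hsum0 _ hnmem, zero_mul]
    -- all basis functions lie in p
    have hbas_mem : ∀ c : M ⧸ L, hlPhi β L χ (Pi.single c 1) ∈ p := by
      intro c
      set x : M × eˣ := (m₁ - c.out, 1) with hx
      set g' : (M × eˣ) → e := (heisRT (heisMul β) x g : (M × eˣ) → e) with hg'
      have hg'p : g' ∈ p := hinv x g hgp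
      have hg'HL : g' ∈ heisHL (heisMul β) L χ := hle hg'p
      have hg'supp : ∀ h : M × eˣ, (QuotientAddGroup.mk h.1 : M ⧸ L) ≠ c → g' h = 0 := by
        intro h hch
        rw [hg', heisRT_apply]
        apply hgsupp
        intro hcontr
        apply hch
        have h5 : ((heisMul β h x).1 : M) = h.1 + (m₁ - c.out) := rfl
        rw [h5] at hcontr
        have h6 : (QuotientAddGroup.mk (h.1 + (m₁ - c.out)) : M ⧸ L)
            = QuotientAddGroup.mk h.1 + QuotientAddGroup.mk m₁ - QuotientAddGroup.mk c.out := by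
          rw [QuotientAddGroup.mk_add, QuotientAddGroup.mk_sub]
          abel
        rw [h6, sub_eq_iff_eq_add] at hcontr
        rw [add_comm (QuotientAddGroup.mk m₁) (QuotientAddGroup.mk c.out)] at hcontr
        have h9 := add_right_cancel hcontr
        rw [h9, QuotientAddGroup.out_eq']
      have hval : g' (c.out, 1) ≠ 0 := by
        rw [hg', heisRT_apply]
        have h9 : heisMul β ((c.out : M), (1 : eˣ)) x = (m₁, β c.out (m₁ - c.out)) := by
          simp [heisMul, hx]
        rw [h9, hl_scal β L χ hβbil hχ hgHL m₁ _]
        exact mul_ne_zero (Units.ne_zero _) hgm1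
      have hPsi : hlPsi L g' = Pi.single c (g' (c.out, 1)) := by
        funext q
        by_cases hqc : q = c
        · subst hqc; rw [Pi.single_eq_same]; rfl
        · rw [Pi.single_eq_of_ne hqc, hlPsi_apply]
          exact hg'supp (q.out, 1) (by rw [QuotientAddGroup.out_eq']; exact hqc)
      have hg'eq : g' = g' (c.out, 1) • hlPhi β L χ (Pi.single c 1) := by
        have h11 := phi_psi β L χ hβbil hχ hg'HL
        conv_lhs => rw [← h11, hPsi, hsingle]
        rw [map_smul]
      have h12 : hlPhi β L χ (Pi.single c 1) = (g' (c.out, 1))⁻¹ • g' := by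
        rw [eq_inv_smul_iff₀ hval]
        exact hg'eq.symm
      rw [h12]
      exact Submodule.smul_mem p _ hg'p
    -- conclude
    have hge : heisHL (heisMul β) L χ ≤ p := by
      intro f' hf'
      have h13 := phi_psi β L χ hβbil hχ hf'
      rw [← h13]
      have h14 : hlPsi L f' = ∑ c : M ⧸ L, Pi.single c (hlPsi L f' c) :=
        (Finset.univ_sum_single _).symm
      rw [h14, map_sum]
      apply Submodule.sum_mem
      intro c _
      rw [hsingle, map_smul]
      exact Submodule.smul_mem p _ (hbas_mem c)
    exact le_antisymm hle hge
  have hd1 : Module.finrank e (heisHL (heisMul β) L χ) * Nat.card L = Fintype.card M := by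
    rw [hrank, ← Nat.card_eq_fintype_card (α := M ⧸ L), ← hcard1, Nat.card_eq_fintype_card]
  refine ⟨stab, hid, hhom, hcentral, hne, hirr, hd1, ?_⟩
  rw [sq]
  nth_rewrite 2 [hrank.trans hcard2]
  exact hd1

/-- For a lagrangian `L ⊆ M` and a character `χ_L` of `L̄ = L × μ_n` extending the
tautological central character, the induced model `H_L` (functions on `H` with
`L̄`-equivariance, `H` acting by right translations) is an irreducible representation
of the Heisenberg group `H` with the tautological central character, of dimension
`|M|/|L| = √|M|`. -/
theorem induced_model_irreducible
    {M : Type*} [AddCommGroup M] [Fintype M]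
    {e : Type*} [Field e] [IsAlgClosed e] [CharZero e]
    (n : ℕ) (hodd : Odd n) (hexp : AddMonoid.exponent M = n)
    (ω β : M → M → eˣ)
    (hωbil : IsMulBilin ω) (hωalt : IsMulAlt ω)
    (hωnd : ∀ m : M, (∀ l : M, ω m l = 1) → m = 0)
    (hωord : ∀ m₁ m₂, ω m₁ m₂ ^ n = 1)
    (hβbil : IsMulBilin β) (hβalt : IsMulAlt β) (hβord : ∀ m₁ m₂, β m₁ m₂ ^ n = 1)
    (hβsq : ∀ m₁ m₂, β m₁ m₂ ^ 2 = ω m₁ m₂)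
    (L : AddSubgroup M)
    (hL : ∀ m : M, m ∈ L ↔ ∀ l ∈ L, ω m l = 1)
    (χ : M → eˣ)
    (hχ : ∀ l₁ ∈ L, ∀ l₂ ∈ L, χ (l₁ + l₂) * β l₁ l₂ = χ l₁ * χ l₂) :
    -- `H_L` is stable under right translation by `H`
    (∀ (x : M × eˣ) (f : (M × eˣ) → e), f ∈ heisHL (heisMul β) L χ →
      heisRT (heisMul β) x f ∈ heisHL (heisMul β) L χ) ∧
    -- right translation is a representation of `H`
    (heisRT (e := e) (heisMul β) ((0 : M), (1 : eˣ)) = LinearMap.id) ∧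
    (∀ x y : M × eˣ, heisRT (e := e) (heisMul β) (heisMul β x y) =
      (heisRT (e := e) (heisMul β) x).comp (heisRT (e := e) (heisMul β) y)) ∧
    -- tautological central character
    (∀ (a : eˣ) (f : (M × eˣ) → e), f ∈ heisHL (heisMul β) L χ →
      heisRT (heisMul β) ((0 : M), a) f = (a : e) • f) ∧
    -- irreducibility
    (heisHL (heisMul β) L χ ≠ ⊥) ∧
    (∀ p : Submodule e ((M × eˣ) → e), p ≤ heisHL (heisMul β) L χ →
      (∀ (x : M × eˣ), ∀ f ∈ p, heisRT (heisMul β) x f ∈ p) →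
      p = ⊥ ∨ p = heisHL (heisMul β) L χ) ∧
    -- dimension |M|/|L| = √|M|
    (Module.finrank e (heisHL (heisMul β) L χ) * Nat.card L = Fintype.card M) ∧
    (Module.finrank e (heisHL (heisMul β) L χ) ^ 2 = Fintype.card M) :=
  induced_model_irreducible' n hodd hexp ω β hωbil hωalt hωnd hωord hβbil hβalt hβord hβsq
    L hL χ hχ
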